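/- arXiv:1903.10686 — 3 statements merged into one kernel-verified Lean document; each statement's English description precedes it below -/
import Mathlib

section
/- The quaternionic exponential map restricts to a homeomorphism from the set {θ ∈ ℍ : Re θ = 0 and ‖θ‖ < π} of purely imaginary quaternions of norm less than π onto the set {q ∈ ℍ : ‖q‖ = 1 and q ≠ -1} of unit quaternions different from -1. In particular, for every unit quaternion q ≠ -1 there is a unique purely imaginary quaternion θ with ‖θ‖ < π and exp θ = q. -/
/-!
A purely imaginary `θ` has `exp θ = cos ‖θ‖ + sinc ‖θ‖ • θ`, a unit quaternion. Conversely a unit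
quaternion `q` with `-1 < q.re` is recovered from `t = arccos q.re ∈ [0, π)` as
`q = cos t + sinc t • ((sinc t)⁻¹ • q.im)`, so `q ↦ (sinc (arccos q.re))⁻¹ • q.im` is a two-sided
inverse of `exp`. It is continuous because `sinc` is continuous and positive on `(-π, π)`; the
excluded point `-1` is exactly where `arccos q.re = π` and `sinc` vanishes.
-/

open Real NormedSpace

namespace Real

lemma sinc_mul_self (x : ℝ) : sinc x * x = sin x := by
  rcases eq_or_ne x 0 with rfl | hx
  · simp
  · rw [sinc_of_ne_zero hx, div_mul_cancel₀ _ hx]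

lemma sinc_pos {x : ℝ} (hx : |x| < π) : 0 < sinc x := by
  rcases eq_or_ne x 0 with rfl | hx0
  · simp
  · have hsinc : sinc x = sinc |x| := by rcases abs_choice x with h | h <;> simp [h]
    rw [hsinc, sinc_of_ne_zero (abs_ne_zero.2 hx0)]
    exact div_pos (sin_pos_of_pos_of_lt_pi (abs_pos.2 hx0) hx) (abs_pos.2 hx0)

lemma sinc_arccos_pos {x : ℝ} (hx : -1 < x) : 0 < sinc (arccos x) :=
  sinc_pos <| (abs_of_nonneg (arccos_nonneg x)).symm ▸ arccos_lt_pi.2 hx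

end Real

namespace Quaternion

lemma norm_sq_eq_re_sq_add_norm_im_sq (q : ℍ[ℝ]) : ‖q‖ ^ 2 = q.re ^ 2 + ‖q.im‖ ^ 2 := by
  simp only [sq, ← normSq_eq_norm_mul_self, normSq_def']
  simp only [re_im, imI_im, imJ_im, imK_im]
  ring

lemma neg_one_lt_re_iff_ne_neg_one {q : ℍ[ℝ]} (hq : ‖q‖ = 1) : -1 < q.re ↔ q ≠ -1 := by
  have hsq := norm_sq_eq_re_sq_add_norm_im_sq q
  rw [hq] at hsq
  refine ⟨fun hre h => by simp [h] at hre, fun hne => ?_⟩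
  have hre : -1 ≤ q.re := by nlinarith [sq_nonneg ‖q.im‖]
  refine hre.lt_of_ne fun h => hne ?_
  have him : q.im = 0 := by
    rw [← h] at hsq
    simpa using hsq
  rw [← re_add_im q, ← h, him]
  simp

lemma continuous_exp : Continuous (exp : ℍ[ℝ] → ℍ[ℝ]) :=
  continuous_iff_continuousAt.2 fun θ => (exp_analytic (𝕂 := ℝ) θ).continuousAt

lemma exp_eq_cos_add_sinc_smul {θ : ℍ[ℝ]} (hθ : θ.re = 0) :
    exp θ = ↑(cos ‖θ‖) + sinc ‖θ‖ • θ := by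
  rcases eq_or_ne θ 0 with rfl | hθ0
  · simp
  · rw [exp_of_re_eq_zero θ hθ, sinc_of_ne_zero (norm_ne_zero_iff.2 hθ0)]

lemma norm_exp_of_re_eq_zero {θ : ℍ[ℝ]} (hθ : θ.re = 0) : ‖exp θ‖ = 1 := by
  simp [norm_exp, hθ]

lemma neg_one_lt_re_exp {θ : ℍ[ℝ]} (hθ : θ.re = 0) (hπ : ‖θ‖ < π) : -1 < (exp θ).re := by
  rw [re_exp, hθ, coe_zero, sub_zero, NormedSpace.exp_zero, one_mul, ← cos_pi]
  exact cos_lt_cos_of_nonneg_of_le_pi (norm_nonneg θ) le_rfl hπ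

noncomputable def unitLog (q : ℍ[ℝ]) : ℍ[ℝ] :=
  (sinc (arccos q.re))⁻¹ • q.im

@[simp]
lemma re_unitLog (q : ℍ[ℝ]) : (unitLog q).re = 0 := by
  simp [unitLog]

lemma norm_unitLog {q : ℍ[ℝ]} (hq : ‖q‖ = 1) (hre : -1 < q.re) :
    ‖unitLog q‖ = arccos q.re := by
  have hsq := norm_sq_eq_re_sq_add_norm_im_sq q
  rw [hq] at hsq
  have him : ‖q.im‖ = sinc (arccos q.re) * arccos q.re := by
    rw [sinc_mul_self, sin_arccos, ← sqrt_sq (norm_nonneg q.im)]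
    congr 1
    linarith
  rw [unitLog, norm_smul, him, norm_inv, norm_of_nonneg (sinc_arccos_pos hre).le,
    inv_mul_cancel_left₀ (sinc_arccos_pos hre).ne']

lemma norm_unitLog_lt_pi {q : ℍ[ℝ]} (hq : ‖q‖ = 1) (hre : -1 < q.re) : ‖unitLog q‖ < π := by
  rw [norm_unitLog hq hre]
  exact arccos_lt_pi.2 hre

lemma exp_unitLog {q : ℍ[ℝ]} (hq : ‖q‖ = 1) (hre : -1 < q.re) : exp (unitLog q) = q := by
  have hre_le : q.re ≤ 1 := by
    nlinarith [norm_sq_eq_re_sq_add_norm_im_sq q, sq_nonneg ‖q.im‖]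
  rw [exp_eq_cos_add_sinc_smul (re_unitLog q), norm_unitLog hq hre, cos_arccos hre.le hre_le,
    unitLog, smul_inv_smul₀ (sinc_arccos_pos hre).ne', re_add_im]

lemma unitLog_exp {θ : ℍ[ℝ]} (hθ : θ.re = 0) (hπ : ‖θ‖ < π) : unitLog (exp θ) = θ := by
  have hsinc : sinc ‖θ‖ ≠ 0 := (sinc_pos ((abs_norm θ).symm ▸ hπ)).ne'
  have hre : (exp θ).re = cos ‖θ‖ := by
    rw [exp_eq_cos_add_sinc_smul hθ]; simp [hθ]
  have him : (exp θ).im = sinc ‖θ‖ • θ := by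
    rw [exp_eq_cos_add_sinc_smul hθ]; ext <;> simp [hθ]
  rw [unitLog, hre, him, arccos_cos (norm_nonneg θ) hπ.le, inv_smul_smul₀ hsinc]

lemma continuousOn_unitLog : ContinuousOn unitLog {q | -1 < q.re} :=
  ContinuousOn.smul (f := fun q : ℍ[ℝ] => (sinc (arccos q.re))⁻¹)
    ((continuous_sinc.comp (continuous_arccos.comp continuous_re)).continuousOn.inv₀
      fun _ hq => (sinc_arccos_pos hq).ne')
    continuous_im.continuousOn

noncomputable def expHomeomorph :
    {θ : ℍ[ℝ] // θ.re = 0 ∧ ‖θ‖ < π} ≃ₜ {q : ℍ[ℝ] // ‖q‖ = 1 ∧ q ≠ -1} where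
  toFun θ := ⟨exp θ, norm_exp_of_re_eq_zero θ.2.1,
    (neg_one_lt_re_iff_ne_neg_one (norm_exp_of_re_eq_zero θ.2.1)).1
      (neg_one_lt_re_exp θ.2.1 θ.2.2)⟩
  invFun q := ⟨unitLog q, re_unitLog q,
    norm_unitLog_lt_pi q.2.1 ((neg_one_lt_re_iff_ne_neg_one q.2.1).2 q.2.2)⟩
  left_inv θ := Subtype.ext (unitLog_exp θ.2.1 θ.2.2)
  right_inv q := Subtype.ext (exp_unitLog q.2.1 ((neg_one_lt_re_iff_ne_neg_one q.2.1).2 q.2.2))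
  continuous_toFun := (continuous_exp.comp continuous_subtype_val).subtype_mk _
  continuous_invFun := (continuousOn_unitLog.comp_continuous continuous_subtype_val
    fun q => (neg_one_lt_re_iff_ne_neg_one q.2.1).2 q.2.2).subtype_mk _

end Quaternion

open Quaternion

/-- The quaternionic exponential restricts to a homeomorphism from the set of purely
imaginary quaternions of norm less than `π` onto the set of unit quaternions different
from `-1`; in particular every unit quaternion `q ≠ -1` is `exp θ` for a unique purely
imaginary `θ` with `‖θ‖ < π`. -/
theorem quaternion_exp_homeomorph :
    (∃ h : Homeomorph {θ : Quaternion ℝ // θ.re = 0 ∧ ‖θ‖ < Real.pi}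
        {q : Quaternion ℝ // ‖q‖ = 1 ∧ q ≠ -1},
      ∀ θ : {θ : Quaternion ℝ // θ.re = 0 ∧ ‖θ‖ < Real.pi},
        (h θ : Quaternion ℝ) = NormedSpace.exp (θ : Quaternion ℝ)) ∧
    ∀ q : Quaternion ℝ, ‖q‖ = 1 → q ≠ -1 →
      ∃! θ : Quaternion ℝ, θ.re = 0 ∧ ‖θ‖ < Real.pi ∧ NormedSpace.exp θ = q := by
  refine ⟨⟨expHomeomorph, fun _ => rfl⟩, fun q hq hne => ?_⟩
  have hre := (neg_one_lt_re_iff_ne_neg_one hq).2 hne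
  refine ⟨unitLog q, ⟨re_unitLog q, norm_unitLog_lt_pi hq hre, exp_unitLog hq hre⟩, ?_⟩
  rintro θ ⟨hθ, hπ, rfl⟩
  exact (unitLog_exp hθ hπ).symm
end

section
/- Let G₀, G₁, G₂ be groups and f : G₀ → G₁, h : G₁ → G₂ group homomorphisms. Consider the action of G₁ on G₁ × G₂ given by g • (a, b) = (a g⁻¹, h(g) b). Then: (i) this action is free; (ii) the map (a, b) ↦ h(a) b descends to a bijection from the orbit space (G₁ × G₂)/G₁ onto G₂; (iii) this bijection intertwines the residual actions: the left action g₀ • (a, b) = (f(g₀) a, b) corresponds to c ↦ h(f(g₀)) c on G₂, and the right action (a, b) • g₂ = (a, b g₂) corresponds to c ↦ c g₂. In other words, the horizontal composition of the bimodules M_f and M_h in Lie_ℝ is the bimodule M_{h∘f}. -/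
/-!
The value `h(a) b` is unchanged by `g • (a, b) = (a g⁻¹, h(g) b)` since `h` is multiplicative,
and two pairs `(a, b)`, `(a', b')` with the same value are related by `g = a'⁻¹ a`; so
`h(a) b` is a complete invariant of the orbits. Freeness is visible in the first coordinate.
-/

namespace MonoidHom

variable {G₁ G₂ : Type*} [Group G₁] [Group G₂] (h : G₁ →* G₂)

/-- The `G₁`-action on `M_f × M_h` whose orbit space is the balanced product `G₁ ×_{G₁} G₂`. -/
def balancedAction (g : G₁) (p : G₁ × G₂) : G₁ × G₂ := (p.1 * g⁻¹, h g * p.2)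

def balancedMul (p : G₁ × G₂) : G₂ := h p.1 * p.2

theorem balancedAction_eq_self_iff (g : G₁) (p : G₁ × G₂) :
    h.balancedAction g p = p ↔ g = 1 := by
  constructor
  · intro hp
    simpa [balancedAction] using congrArg Prod.fst hp
  · rintro rfl
    simp [balancedAction]

theorem balancedMul_surjective : Function.Surjective h.balancedMul :=
  fun c => ⟨(1, c), by simp [balancedMul]⟩

theorem balancedMul_balancedAction (g : G₁) (p : G₁ × G₂) :
    h.balancedMul (h.balancedAction g p) = h.balancedMul p := by
  simp [balancedMul, balancedAction, mul_assoc]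

theorem balancedMul_eq_iff (p q : G₁ × G₂) :
    h.balancedMul p = h.balancedMul q ↔ ∃ g : G₁, h.balancedAction g p = q := by
  constructor
  · intro hpq
    refine ⟨q.1⁻¹ * p.1, Prod.ext (by simp [balancedAction]) ?_⟩
    calc h (q.1⁻¹ * p.1) * p.2 = (h q.1)⁻¹ * h.balancedMul p := by
          simp [balancedMul, mul_assoc]
      _ = q.2 := by rw [hpq, balancedMul, inv_mul_cancel_left]
  · rintro ⟨g, rfl⟩
    exact (h.balancedMul_balancedAction g p).symm

theorem balancedMul_mul_fst (g : G₁) (p : G₁ × G₂) :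
    h.balancedMul (g * p.1, p.2) = h g * h.balancedMul p := by
  simp [balancedMul, mul_assoc]

theorem balancedMul_mul_snd (c : G₂) (p : G₁ × G₂) :
    h.balancedMul (p.1, p.2 * c) = h.balancedMul p * c :=
  (mul_assoc _ _ _).symm

end MonoidHom

/-- Horizontal composition of the bimodules `M_f` and `M_h` in `Lie_ℝ` is `M_{h∘f}`:
the `G₁`-action `g • (a, b) = (a g⁻¹, h(g) b)` on `G₁ × G₂` is free, the map
`(a, b) ↦ h(a) b` descends to a bijection from the orbit space onto `G₂`, and this
bijection intertwines the residual left `G₀`-action and right `G₂`-action. -/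
theorem bimodule_composition_of_homomorphisms
    {G₀ G₁ G₂ : Type*} [Group G₀] [Group G₁] [Group G₂]
    (f : G₀ →* G₁) (h : G₁ →* G₂) :
    -- (i) freeness
    (∀ (g : G₁) (p : G₁ × G₂), (p.1 * g⁻¹, h g * p.2) = p → g = 1) ∧
    -- (ii) `(a,b) ↦ h(a) b` is surjective and its fibers are exactly the orbits
    Function.Surjective (fun p : G₁ × G₂ => h p.1 * p.2) ∧
    (∀ p q : G₁ × G₂,
      h p.1 * p.2 = h q.1 * q.2 ↔ ∃ g : G₁, (p.1 * g⁻¹, h g * p.2) = q) ∧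
    -- (iii) intertwining of the residual actions
    (∀ (g₀ : G₀) (p : G₁ × G₂),
      h (f g₀ * p.1) * p.2 = h (f g₀) * (h p.1 * p.2)) ∧
    (∀ (g₂ : G₂) (p : G₁ × G₂),
      h p.1 * (p.2 * g₂) = (h p.1 * p.2) * g₂) :=
  ⟨fun g p => (h.balancedAction_eq_self_iff g p).mp,
    h.balancedMul_surjective,
    h.balancedMul_eq_iff,
    fun g₀ p => h.balancedMul_mul_fst (f g₀) p,
    fun g₂ p => h.balancedMul_mul_snd g₂ p⟩
end

section
/- Let G be a group and let G act on (G × G) × (G × G) by g • ((a, b), (c, d)) = ((a g⁻¹, b g⁻¹), (g c, d)). Then: (i) this action is free; (ii) the map ((a, b), (c, d)) ↦ (a c, b c, d) descends to a bijection from the orbit space onto G × G × G; (iii) under this bijection the four residual actions become: g • (a,b) = (g a, b) corresponds to left multiplication on the first coordinate, g • (a,b) = (a, g b) to left multiplication on the second coordinate, g • (c,d) = (c, g d) to left multiplication on the third coordinate, and g • (c,d) = (c g⁻¹, d g⁻¹) to simultaneous right multiplication by g⁻¹ on all three coordinates. Consequently both bracketings of the iterated pair-of-pants product yield the same model G ×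 G × G with these four actions, so the product is associative. -/
/-!
Gluing the third leg of one pair of pants to the first leg of another is the quotient of
`(G × G) × (G × G)` by `g • ((a, b), (c, d)) = ((a g⁻¹, b g⁻¹), (g c, d))`. The map
`((a, b), (c, d)) ↦ (a c, b c, d)` is invariant under this action, has the section
`(x, y, z) ↦ ((x, y), (1, z))`, and two points with the same image differ by
`g = c' c⁻¹`; so it identifies the orbit space with `G × G × G`. Freeness is read off the
coordinate `c ↦ g c`, and the residual actions transport by associativity alone.
-/

namespace PairOfPants

variable {G : Type*} [Group G]

def glue (g : G) (p : (G × G) × (G × G)) : (G × G) × (G × G) :=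
  ((p.1.1 * g⁻¹, p.1.2 * g⁻¹), (g * p.2.1, p.2.2))

def collapse (p : (G × G) × (G × G)) : G × G × G :=
  (p.1.1 * p.2.1, p.1.2 * p.2.1, p.2.2)

theorem eq_one_of_glue_eq_self {g : G} {p : (G × G) × (G × G)} (h : glue g p = p) : g = 1 :=
  mul_eq_right.mp (congrArg (·.2.1) h)

theorem collapse_surjective : Function.Surjective (collapse : (G × G) × (G × G) → G × G × G) :=
  fun ⟨x, y, z⟩ => ⟨((x, y), (1, z)), by simp [collapse]⟩

@[simp]
theorem collapse_glue (g : G) (p : (G × G) × (G × G)) : collapse (glue g p) = collapse p := by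
  simp [collapse, glue, mul_assoc]

theorem mul_inv_mul_inv_eq_of_mul_eq_mul {a a' c c' : G} (h : a * c = a' * c') :
    a * (c' * c⁻¹)⁻¹ = a' := by
  rw [mul_inv_rev, inv_inv, ← mul_assoc, h, mul_inv_cancel_right]

theorem glue_of_collapse_eq {p q : (G × G) × (G × G)} (h : collapse p = collapse q) :
    glue (q.2.1 * p.2.1⁻¹) p = q := by
  obtain ⟨⟨a, b⟩, c, d⟩ := p
  obtain ⟨⟨a', b'⟩, c', d'⟩ := q
  obtain ⟨ha, hb, hd⟩ : a * c = a' * c' ∧ b * c = b' * c' ∧ d = d' := by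
    simpa [collapse] using h
  simp only [glue, mul_inv_mul_inv_eq_of_mul_eq_mul ha, mul_inv_mul_inv_eq_of_mul_eq_mul hb,
    inv_mul_cancel_right, hd]

theorem collapse_eq_iff {p q : (G × G) × (G × G)} :
    collapse p = collapse q ↔ ∃ g : G, glue g p = q :=
  ⟨fun h => ⟨_, glue_of_collapse_eq h⟩, fun ⟨g, hg⟩ => hg ▸ (collapse_glue g p).symm⟩

end PairOfPants

/-- Associativity of the pair-of-pants product: the gluing action of `G` on
`(G × G) × (G × G)` given by `g • ((a,b),(c,d)) = ((a g⁻¹, b g⁻¹), (g c, d))` is free,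
the map `((a,b),(c,d)) ↦ (ac, bc, d)` descends to a bijection from the orbit space onto
`G × G × G`, and under this bijection the four residual actions are left multiplication
on each of the three coordinates and simultaneous right multiplication by `g⁻¹` on all
three; hence both bracketings of the iterated product yield the same model. -/
theorem pair_of_pants_associativity (G : Type*) [Group G] :
    -- (i) freeness
    (∀ (g : G) (p : (G × G) × (G × G)),
      (((p.1.1 * g⁻¹, p.1.2 * g⁻¹), (g * p.2.1, p.2.2)) : (G × G) × (G × G)) = p → g = 1) ∧
    -- (ii) `((a,b),(c,d)) ↦ (ac, bc, d)` is surjective with fibers the orbits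
    Function.Surjective (fun p : (G × G) × (G × G) =>
      ((p.1.1 * p.2.1, p.1.2 * p.2.1, p.2.2) : G × G × G)) ∧
    (∀ p q : (G × G) × (G × G),
      ((p.1.1 * p.2.1, p.1.2 * p.2.1, p.2.2) : G × G × G)
          = (q.1.1 * q.2.1, q.1.2 * q.2.1, q.2.2)
        ↔ ∃ g : G,
          (((p.1.1 * g⁻¹, p.1.2 * g⁻¹), (g * p.2.1, p.2.2)) : (G × G) × (G × G)) = q) ∧
    -- (iii) the four residual actions
    (∀ (g : G) (p : (G × G) × (G × G)),
      (((g * p.1.1) * p.2.1, p.1.2 * p.2.1, p.2.2) : G × G × G)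
        = (g * (p.1.1 * p.2.1), p.1.2 * p.2.1, p.2.2)) ∧
    (∀ (g : G) (p : (G × G) × (G × G)),
      ((p.1.1 * p.2.1, (g * p.1.2) * p.2.1, p.2.2) : G × G × G)
        = (p.1.1 * p.2.1, g * (p.1.2 * p.2.1), p.2.2)) ∧
    (∀ (g : G) (p : (G × G) × (G × G)),
      ((p.1.1 * p.2.1, p.1.2 * p.2.1, g * p.2.2) : G × G × G)
        = (p.1.1 * p.2.1, p.1.2 * p.2.1, g * p.2.2)) ∧
    (∀ (g : G) (p : (G × G) × (G × G)),
      ((p.1.1 * (p.2.1 * g⁻¹), p.1.2 * (p.2.1 * g⁻¹), p.2.2 * g⁻¹) : G × G × G)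
        = ((p.1.1 * p.2.1) * g⁻¹, (p.1.2 * p.2.1) * g⁻¹, p.2.2 * g⁻¹)) :=
  ⟨fun _ _ => PairOfPants.eq_one_of_glue_eq_self,
    PairOfPants.collapse_surjective,
    fun _ _ => PairOfPants.collapse_eq_iff,
    fun _ _ => by rw [mul_assoc],
    fun _ _ => by rw [mul_assoc],
    fun _ _ => rfl,
    fun _ _ => by simp only [mul_assoc]⟩
end
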